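/- For all natural numbers n and m, the alternating convolution sum Σ_{q=0}^{2m} (-1)^q C(n,q)·C(n-2,2m-q) equals (-1)^m C(n-2,m) + (-1)^{m-1} C(n-2,m-1). -/

import Mathlib

/-!
For `n = k + 2`, both sides are the coefficient of `X ^ (2m)` in
`(1 - X) ^ (k + 2) * (1 + X) ^ k = (1 - X ^ 2) ^ k * (1 - X) ^ 2`: on the left by the Cauchy product,
on the right because `(1 - X ^ 2) ^ k` only has even coefficients, so `(1 - X) ^ 2 = 1 - 2X + X ^ 2`
picks up just the coefficients of `X ^ (2m)` and `X ^ (2m - 2)`. For `n < 2` every `ichoose (n - 2) _`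
vanishes.
-/

/-- Binomial coefficient extended to integer arguments: 0 unless 0 ≤ k ≤ n. -/
def ichoose (n k : ℤ) : ℤ :=
  if 0 ≤ k ∧ k ≤ n then (n.toNat).choose k.toNat else 0

open Polynomial Finset

namespace Polynomial

variable {R : Type*} [CommRing R]

theorem coeff_one_sub_X_pow (n k : ℕ) :
    ((1 - X : R[X]) ^ n).coeff k = (-1) ^ k * n.choose k := by
  have hterm (i : ℕ) : (-X : R[X]) ^ i * 1 ^ (n - i) * (n.choose i : R[X])
      = C ((-1 : R) ^ i * n.choose i) * X ^ i := by
    simp only [neg_pow (X : R[X]), one_pow, mul_one, C_mul, C_pow, C_neg, C_1, C_eq_natCast]; ring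
  simp_rw [sub_eq_neg_add, add_pow, hterm, finsetSum_coeff, coeff_C_mul_X_pow]
  rw [sum_ite_eq, ite_eq_left_iff]
  intro hk
  rw [Nat.choose_eq_zero_of_lt (by simpa using hk), Nat.cast_zero, mul_zero]

theorem coeff_one_sub_X_sq_pow_mul_one_sub_X_sq (n m : ℕ) :
    ((1 - X ^ 2 : R[X]) ^ n * (1 - X) ^ 2).coeff (2 * m + 2)
      = (-1) ^ (m + 1) * (n.choose (m + 1) : R) + (-1) ^ m * (n.choose m : R) := by
  have hexpand : (1 - X ^ 2 : R[X]) ^ n = expand R 2 ((1 - X) ^ n) := by simp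
  have hsplit : (1 - X ^ 2 : R[X]) ^ n * (1 - X) ^ 2
      = (1 - X ^ 2) ^ n - 2 * ((1 - X ^ 2) ^ n * X) + (1 - X ^ 2) ^ n * X ^ 2 := by
    ring
  rw [hsplit, coeff_add, coeff_sub, coeff_ofNat_mul, hexpand, coeff_mul_X_pow, coeff_mul_X]
  simp only [coeff_expand two_pos]
  have hodd : ¬ 2 ∣ 2 * m + 1 := by omega
  rw [show 2 * m + 2 = 2 * (m + 1) by ring]
  simp only [dvd_mul_right, hodd, if_true, if_false, mul_zero, sub_zero,
    Nat.mul_div_cancel_left _ two_pos, coeff_one_sub_X_pow]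

end Polynomial

theorem sum_range_neg_one_pow_mul_choose_mul_choose {R : Type*} [CommRing R] (k m : ℕ) :
    ∑ q ∈ range (2 * m + 3), (-1 : R) ^ q * (k + 2).choose q * k.choose (2 * m + 2 - q)
      = (-1) ^ (m + 1) * k.choose (m + 1) + (-1) ^ m * k.choose m := by
  have hfactor : (1 - X : R[X]) ^ (k + 2) * (1 + X) ^ k = (1 - X ^ 2) ^ k * (1 - X) ^ 2 := by
    rw [show (1 - X ^ 2 : R[X]) = (1 - X) * (1 + X) by ring, mul_pow]; ring
  rw [← coeff_one_sub_X_sq_pow_mul_one_sub_X_sq, ← hfactor, coeff_mul,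
    Nat.sum_antidiagonal_eq_sum_range_succ_mk]
  simp_rw [coeff_one_sub_X_pow, coeff_one_add_X_pow]

theorem ichoose_natCast (a b : ℕ) : ichoose a b = a.choose b := by
  unfold ichoose
  split_ifs with h
  · simp
  · rw [Nat.choose_eq_zero_of_lt (by omega), Nat.cast_zero]

theorem ichoose_of_neg_left {n : ℤ} (k : ℤ) (hn : n < 0) : ichoose n k = 0 :=
  if_neg fun h => by omega

theorem alternating_convolution (n m : ℕ) :
    ∑ q ∈ Finset.range (2 * m + 1),
        (-1 : ℤ) ^ q * ichoose (n : ℤ) (q : ℤ) * ichoose ((n : ℤ) - 2) (2 * (m : ℤ) - q)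
      = (-1 : ℤ) ^ m * ichoose ((n : ℤ) - 2) (m : ℤ)
        + (-1 : ℤ) ^ (m + 1) * ichoose ((n : ℤ) - 2) ((m : ℤ) - 1) := by
  rcases Nat.lt_or_ge n 2 with hn | hn
  · simp [ichoose_of_neg_left _ (by omega : (n : ℤ) - 2 < 0)]
  obtain ⟨k, rfl⟩ := Nat.exists_eq_add_of_le' hn
  rw [show ((k + 2 : ℕ) : ℤ) - 2 = k by push_cast; ring]
  rcases m with _ | m
  · simp [ichoose]; positivity
  have hterm (q : ℕ) (hq : q ∈ range (2 * (m + 1) + 1)) :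
      ichoose k (2 * ((m + 1 : ℕ) : ℤ) - q) = k.choose (2 * m + 2 - q) := by
    rw [mem_range] at hq
    rw [← ichoose_natCast]
    congr 1
    omega
  rw [sum_congr rfl fun q hq => by rw [ichoose_natCast, hterm q hq]]
  rw [show ((m + 1 : ℕ) : ℤ) - 1 = m by push_cast; ring, ichoose_natCast, ichoose_natCast,
    show 2 * (m + 1) + 1 = 2 * m + 3 by ring, sum_range_neg_one_pow_mul_choose_mul_choose]
  ring
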